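/- For all x, y in the unit ball B^n, j(x,y) ≤ (1 + min(|x|,|y|))·c(x,y) ≤ 2·c(x,y), where j is the distance ratio metric and c the Cassinian metric of B^n. -/

import Mathlib

open Metric Set

abbrev E (n : ℕ) := EuclideanSpace ℝ (Fin n)

/-- The Cassinian metric of a domain `D`. -/
noncomputable def cassinian {n : ℕ} (D : Set (E n)) (x y : E n) : ℝ :=
  ⨆ p : frontier D, dist x y / (dist x (p : E n) * dist (p : E n) y)

/-- The distance ratio metric of the unit ball, where δ(x) = 1 - |x|. -/
noncomputable def jBall {n : ℕ} (x y : E n) : ℝ :=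
  Real.log (1 + dist x y / min (1 - ‖x‖) (1 - ‖y‖))

/-!
Assume `‖y‖ ≤ ‖x‖` and take the boundary point `p = x / ‖x‖` nearest to `x`. Then
`|x - p| = 1 - |x|` and `|p - y| ≤ 1 + |y|`, so with `log (1 + t) ≤ t`,
`j(x, y) ≤ |x - y| / (1 - |x|) ≤ (1 + |y|) |x - y| / (|x - p| |p - y|) ≤ (1 + |y|) c(x, y)`.
-/

lemma dist_inv_norm_smul_self {F : Type*} [NormedAddCommGroup F] [NormedSpace ℝ F] {x : F}
    (hx : x ≠ 0) : dist x (‖x‖⁻¹ • x) = |‖x‖ - 1| := by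
  have hx' : 0 < ‖x‖ := norm_pos_iff.mpr hx
  have hsub : x - ‖x‖⁻¹ • x = (1 - ‖x‖⁻¹) • x := by rw [sub_smul, one_smul]
  have hscale : (1 - ‖x‖⁻¹) * ‖x‖ = ‖x‖ - 1 := by field_simp
  rw [dist_eq_norm, hsub, norm_smul, Real.norm_eq_abs, ← hscale, abs_mul, abs_norm]

lemma one_sub_norm_le_dist_of_norm_eq_one {G : Type*} [SeminormedAddCommGroup G] {x p : G}
    (hp : ‖p‖ = 1) : 1 - ‖x‖ ≤ dist x p := by
  rw [dist_comm, dist_eq_norm, ← hp]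
  exact norm_sub_norm_le p x

variable {n : ℕ}

lemma cassinian_comm (D : Set (E n)) (x y : E n) :
    cassinian D x y = cassinian D y x := by
  unfold cassinian
  congr 1 with p
  rw [dist_comm x y, dist_comm x (p : E n), dist_comm (p : E n) y, mul_comm]

lemma cassinian_nonneg (D : Set (E n)) (x y : E n) : 0 ≤ cassinian D x y :=
  Real.iSup_nonneg fun _ => by positivity

lemma jBall_comm (x y : E n) : jBall x y = jBall y x := by
  rw [jBall, jBall, dist_comm, min_comm]

lemma bddAbove_cassinian_unitBall {x y : E n} (hx : ‖x‖ < 1) (hy : ‖y‖ < 1) :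
    BddAbove (range fun p : frontier (ball (0 : E n) 1) =>
      dist x y / (dist x (p : E n) * dist (p : E n) y)) := by
  refine ⟨dist x y / ((1 - ‖x‖) * (1 - ‖y‖)), ?_⟩
  rintro _ ⟨⟨p, hp⟩, rfl⟩
  rw [frontier_ball 0 one_ne_zero, mem_sphere_zero_iff_norm] at hp
  have hpx := one_sub_norm_le_dist_of_norm_eq_one (x := x) hp
  have hpy := one_sub_norm_le_dist_of_norm_eq_one (x := y) hp
  rw [dist_comm y] at hpy
  dsimp only
  gcongr

lemma le_cassinian_unitBall {x y p : E n} (hx : ‖x‖ < 1) (hy : ‖y‖ < 1) (hp : ‖p‖ = 1) :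
    dist x y / (dist x p * dist p y) ≤ cassinian (ball (0 : E n) 1) x y := by
  have hp' : p ∈ frontier (ball (0 : E n) 1) := by
    rwa [frontier_ball 0 one_ne_zero, mem_sphere_zero_iff_norm]
  exact le_ciSup (bddAbove_cassinian_unitBall hx hy) ⟨p, hp'⟩

lemma jBall_le_dist_div_one_sub_norm {x y : E n} (hx : ‖x‖ < 1) (hyx : ‖y‖ ≤ ‖x‖) :
    jBall x y ≤ dist x y / (1 - ‖x‖) := by
  rw [jBall, min_eq_left (by linarith)]
  have hx' : 0 < 1 - ‖x‖ := by linarith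
  linarith [Real.log_le_sub_one_of_pos (by positivity : 0 < 1 + dist x y / (1 - ‖x‖))]

lemma dist_div_one_sub_norm_le_cassinian {x y : E n} (hx : ‖x‖ < 1) (hy : ‖y‖ < 1)
    (hyx : ‖y‖ ≤ ‖x‖) :
    dist x y / (1 - ‖x‖) ≤ (1 + ‖y‖) * cassinian (ball (0 : E n) 1) x y := by
  rcases eq_or_ne x 0 with rfl | hx0
  · obtain rfl : y = 0 := norm_le_zero_iff.mp (by simpa using hyx)
    simpa using cassinian_nonneg (ball (0 : E n) 1) 0 0
  set p : E n := ‖x‖⁻¹ • x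
  have hp : ‖p‖ = 1 := norm_smul_inv_norm hx0
  have hxp : dist x p = 1 - ‖x‖ := by
    rw [dist_inv_norm_smul_self hx0, abs_of_neg (by linarith), neg_sub]
  have hpy_pos : 0 < dist p y := dist_pos.mpr fun h => by rw [h] at hp; linarith
  have hpy_le : dist p y ≤ 1 + ‖y‖ := hp ▸ dist_le_norm_add_norm p y
  calc dist x y / (1 - ‖x‖)
      ≤ dist x y / (1 - ‖x‖) * ((1 + ‖y‖) / dist p y) :=
        le_mul_of_one_le_right (by positivity) ((one_le_div hpy_pos).mpr hpy_le)
    _ = (1 + ‖y‖) * (dist x y / (dist x p * dist p y)) := by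
        rw [hxp]; field_simp
    _ ≤ (1 + ‖y‖) * cassinian (ball (0 : E n) 1) x y := by
        gcongr; exact le_cassinian_unitBall hx hy hp

lemma jBall_le_one_add_min_mul_cassinian {x y : E n} (hx : ‖x‖ < 1) (hy : ‖y‖ < 1) :
    jBall x y ≤ (1 + min ‖x‖ ‖y‖) * cassinian (ball (0 : E n) 1) x y := by
  wlog hyx : ‖y‖ ≤ ‖x‖ generalizing x y
  · rw [jBall_comm, cassinian_comm, min_comm]
    exact this hy hx (le_of_not_ge hyx)
  rw [min_eq_right hyx]
  exact (jBall_le_dist_div_one_sub_norm hx hyx).trans (dist_div_one_sub_norm_le_cassinian hx hy hyx)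

theorem jBall_le_cassinian_general (n : ℕ) (x y : E n)
    (hx : x ∈ ball (0 : E n) 1) (hy : y ∈ ball (0 : E n) 1) :
    jBall x y ≤ (1 + min ‖x‖ ‖y‖) * cassinian (ball (0 : E n) 1) x y ∧
      (1 + min ‖x‖ ‖y‖) * cassinian (ball (0 : E n) 1) x y ≤
        2 * cassinian (ball (0 : E n) 1) x y := by
  rw [mem_ball_zero_iff] at hx hy
  refine ⟨jBall_le_one_add_min_mul_cassinian hx hy, ?_⟩
  have hmin : min ‖x‖ ‖y‖ ≤ 1 := (min_le_left _ _).trans hx.le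
  exact mul_le_mul_of_nonneg_right (by linarith) (cassinian_nonneg _ x y)

theorem jBall_le_cassinian (n : ℕ) (hn : 2 ≤ n) (x y : E n)
    (hx : x ∈ ball (0 : E n) 1) (hy : y ∈ ball (0 : E n) 1) :
    jBall x y ≤ (1 + min ‖x‖ ‖y‖) * cassinian (ball (0 : E n) 1) x y ∧
      (1 + min ‖x‖ ‖y‖) * cassinian (ball (0 : E n) 1) x y ≤
        2 * cassinian (ball (0 : E n) 1) x y :=
  jBall_le_cassinian_general n x y hx hy
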